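/- arXiv:1509.02042 — 2 statements merged into one kernel-verified Lean document; each statement's English description precedes it below -/
import Mathlib

section
/- Let λ ≥ 0 and b > 0 with λ_b := λ > 0 fixed, and let (λ_i)_{i≥1} be a nonnegative sequence with ∑_{i=1}^∞ λ_i = ∞. For δ > 0 and k ∈ ℕ define F(δ,k) = e^{-δ} · (1 - ∏_{a=-k}^{k} (1 - e^{-2δ}·(1 - e^{-λ_{|a|}δ/2})·(1 - e^{-λ_b δ/2}))), with λ_0 := 0. Then for every ε > 0 there exist δ > 0 and K such that F(δ,k) > 1 - ε for all k ≥ K. -/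
open Filter Real

private lemma half_min_le_one_sub_exp {x : ℝ} (hx : 0 ≤ x) :
    min x 1 / 2 ≤ 1 - exp (-x) := by
  rcases le_or_gt x 1 with h | h
  · rw [min_eq_left h]
    have h1 : x + 1 ≤ exp x := Real.add_one_le_exp x
    have h2 : exp (-x) * exp x = 1 := by
      rw [← Real.exp_add]; simp
    have h3 : 0 < exp (-x) := exp_pos _
    nlinarith
  · rw [min_eq_right h.le]
    have h1 : exp (-x) ≤ exp (-1) := by
      apply Real.exp_le_exp.2; linarith
    have h2 : exp (-1) * exp 1 = 1 := by rw [← Real.exp_add]; simp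
    have h3 : (2 : ℝ) < exp 1 := by
      have := Real.exp_one_gt_d9; linarith
    have h4 : 0 < exp (-1) := exp_pos _
    nlinarith

private lemma one_le_sum_min {s : Finset ℕ} {y : ℕ → ℝ} (hy : ∀ i, 0 ≤ y i)
    (h : (1 : ℝ) ≤ ∑ i ∈ s, y i) : (1 : ℝ) ≤ ∑ i ∈ s, min (y i) 1 := by
  by_cases hex : ∃ i ∈ s, 1 ≤ y i
  · obtain ⟨i, his, hi⟩ := hex
    calc (1 : ℝ) = min (y i) 1 := (min_eq_right hi).symm
      _ ≤ ∑ j ∈ s, min (y j) 1 :=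
        Finset.single_le_sum (fun j _ => le_min (hy j) zero_le_one) his
  · push_neg at hex
    have : ∑ i ∈ s, min (y i) 1 = ∑ i ∈ s, y i :=
      Finset.sum_congr rfl fun i hi => min_eq_left (hex i hi).le
    linarith

private lemma tendsto_sum_min (y : ℕ → ℝ) (hy : ∀ i, 0 ≤ y i)
    (hdiv : Tendsto (fun k => ∑ i ∈ Finset.Ioc 0 k, y i) atTop atTop) :
    Tendsto (fun k => ∑ i ∈ Finset.Ioc 0 k, min (y i) 1) atTop atTop := by
  have hmono : Monotone (fun k => ∑ i ∈ Finset.Ioc 0 k, min (y i) 1) := by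
    intro a b hab
    apply Finset.sum_le_sum_of_subset_of_nonneg
    · exact Finset.Ioc_subset_Ioc le_rfl hab
    · exact fun i _ _ => le_min (hy i) zero_le_one
  rw [tendsto_atTop]
  intro M
  obtain ⟨n, hn⟩ := exists_nat_ge M
  have key : ∀ n : ℕ, ∃ k, (n : ℝ) ≤ ∑ i ∈ Finset.Ioc 0 k, min (y i) 1 := by
    intro n
    induction n with
    | zero => exact ⟨0, by simp⟩
    | succ m ih =>
      obtain ⟨k, hk⟩ := ih
      obtain ⟨k', hk'₂, hk'₁⟩ :=
        ((hdiv.eventually_ge_atTop ((∑ i ∈ Finset.Ioc 0 k, y i) + 1)).and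
          (eventually_ge_atTop k)).exists
      refine ⟨k', ?_⟩
      have hsplit : ∑ i ∈ Finset.Ioc 0 k, y i + ∑ i ∈ Finset.Ioc k k', y i
          = ∑ i ∈ Finset.Ioc 0 k', y i :=
        Finset.sum_Ioc_consecutive _ (Nat.zero_le k) hk'₁
      have hsplit2 : ∑ i ∈ Finset.Ioc 0 k, min (y i) 1 + ∑ i ∈ Finset.Ioc k k', min (y i) 1
          = ∑ i ∈ Finset.Ioc 0 k', min (y i) 1 :=
        Finset.sum_Ioc_consecutive _ (Nat.zero_le k) hk'₁
      have h1 : (1 : ℝ) ≤ ∑ i ∈ Finset.Ioc k k', y i := by linarith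
      have h2 : (1 : ℝ) ≤ ∑ i ∈ Finset.Ioc k k', min (y i) 1 := one_le_sum_min hy h1
      push_cast
      linarith
  obtain ⟨k, hk⟩ := key n
  filter_upwards [eventually_ge_atTop k] with m hm
  exact le_trans hn (le_trans hk (hmono hm))

theorem truncation_stmt4 (lam : ℕ → ℝ) (hlam : ∀ i, 0 ≤ lam i) (hlam0 : lam 0 = 0)
    (hdiv : Tendsto (fun k => ∑ i ∈ Finset.Icc 1 k, lam i) atTop atTop)
    (b : ℕ) (hb : 0 < b) (hlamb : 0 < lam b)
    (F : ℝ → ℕ → ℝ)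
    (hF : ∀ (δ : ℝ) (k : ℕ), F δ k =
      exp (-δ) * (1 - ∏ a ∈ Finset.Icc (-(k : ℤ)) (k : ℤ),
        (1 - exp (-(2*δ)) * (1 - exp (-(lam a.natAbs * δ / 2)))
          * (1 - exp (-(lam b * δ / 2)))))) :
    ∀ ε > (0 : ℝ), ∃ δ > (0 : ℝ), ∃ K : ℕ, ∀ k ≥ K, F δ k > 1 - ε := by
  intro ε hε
  set δ : ℝ := ε / 2 with hδdef
  have hδ : 0 < δ := by positivity
  refine ⟨δ, hδ, ?_⟩
  -- basic quantities
  set gb : ℝ := 1 - exp (-(lam b * δ / 2)) with hgbdef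
  have hgb0 : 0 < gb := by
    have : exp (-(lam b * δ / 2)) < 1 := by
      rw [Real.exp_lt_one_iff]
      have := mul_pos hlamb hδ
      linarith
    simp only [hgbdef]
    linarith
  have hgb1 : gb ≤ 1 := by
    have := (exp_pos (-(lam b * δ / 2))).le
    simp only [hgbdef]; linarith
  set c : ℝ := exp (-(2 * δ)) * gb with hcdef
  have hc0 : 0 < c := mul_pos (exp_pos _) hgb0
  have hc1 : c ≤ 1 := by
    have h1 : exp (-(2 * δ)) ≤ 1 := by
      rw [Real.exp_le_one_iff]; linarith
    nlinarith [exp_pos (-(2 * δ))]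
  set g : ℤ → ℝ := fun a => 1 - exp (-(lam a.natAbs * δ / 2)) with hgdef
  have hg0 : ∀ a, 0 ≤ g a := by
    intro a
    have : exp (-(lam a.natAbs * δ / 2)) ≤ 1 := by
      rw [Real.exp_le_one_iff]
      nlinarith [hlam a.natAbs]
    simp only [hgdef]; linarith
  have hg1 : ∀ a, g a ≤ 1 := by
    intro a
    have := (exp_pos (-(lam a.natAbs * δ / 2))).le
    simp only [hgdef]; linarith
  -- each factor of the product lies in [0,1]
  set f : ℤ → ℝ := fun a => 1 - exp (-(2 * δ)) * (1 - exp (-(lam a.natAbs * δ / 2))) * gb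
    with hfdef
  have hfeq : ∀ a, f a = 1 - c * g a := by
    intro a; simp only [hfdef, hcdef, hgdef]; ring
  have hf0 : ∀ a, 0 ≤ f a := by
    intro a
    rw [hfeq a]
    nlinarith [hg0 a, hg1 a]
  have hf1 : ∀ a, f a ≤ 1 := by
    intro a
    rw [hfeq a]
    nlinarith [hg0 a]
  -- the sum ∑ min (lam i * δ / 2) 1 diverges
  have hydiv : Tendsto (fun k => ∑ i ∈ Finset.Ioc 0 k, (lam i * (δ / 2))) atTop atTop := by
    have h1 : Tendsto (fun k => (∑ i ∈ Finset.Icc 1 k, lam i) * (δ / 2)) atTop atTop :=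
      hdiv.atTop_mul_const (by positivity)
    have h2 : ∀ k, (∑ i ∈ Finset.Icc 1 k, lam i) * (δ / 2)
        = ∑ i ∈ Finset.Ioc 0 k, (lam i * (δ / 2)) := by
      intro k
      rw [← Finset.Icc_add_one_left_eq_Ioc, zero_add, Finset.sum_mul]
    simpa [h2] using h1
  have hT : Tendsto (fun k => ∑ i ∈ Finset.Ioc 0 k, min (lam i * (δ / 2)) 1) atTop atTop :=
    tendsto_sum_min _ (fun i => mul_nonneg (hlam i) (by positivity)) hydiv
  set T : ℕ → ℝ := fun k => ∑ i ∈ Finset.Ioc 0 k, min (lam i * (δ / 2)) 1 with hTdef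
  -- exp (-(c/2 * T k)) → 0
  have hE : Tendsto (fun k => exp (-(c / 2 * T k))) atTop (nhds 0) := by
    apply Real.tendsto_exp_atBot.comp
    apply tendsto_neg_atTop_atBot.comp
    exact hT.const_mul_atTop (by linarith)
  obtain ⟨K, hK⟩ := (hE.eventually_lt_const (show (0:ℝ) < ε / 2 by positivity)).exists_forall_of_atTop
  refine ⟨K, ?_⟩
  intro k hk
  have hKk := hK k hk
  -- bound the product
  set P : ℝ := ∏ a ∈ Finset.Icc (-(k : ℤ)) (k : ℤ), f a with hPdef
  have hP0 : 0 ≤ P := Finset.prod_nonneg fun a _ => hf0 a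
  -- restrict the product to positive indices
  have hsub : (Finset.Ioc 0 k).image (fun i : ℕ => (i : ℤ)) ⊆ Finset.Icc (-(k : ℤ)) (k : ℤ) := by
    intro a ha
    simp only [Finset.mem_image, Finset.mem_Ioc] at ha
    obtain ⟨i, ⟨hi0, hik⟩, rfl⟩ := ha
    simp only [Finset.mem_Icc]
    omega
  have hP_le : P ≤ ∏ i ∈ Finset.Ioc 0 k, f (i : ℤ) := by
    have himg : ∏ a ∈ (Finset.Ioc 0 k).image (fun i : ℕ => (i : ℤ)), f a
        = ∏ i ∈ Finset.Ioc 0 k, f (i : ℤ) :=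
      Finset.prod_image (fun i _ j _ h => by exact_mod_cast h)
    rw [hPdef, ← Finset.prod_sdiff hsub, himg]
    have h1 : ∏ a ∈ Finset.Icc (-(k : ℤ)) (k : ℤ) \ (Finset.Ioc 0 k).image
        (fun i : ℕ => (i : ℤ)), f a ≤ 1 :=
      Finset.prod_le_one (fun a _ => hf0 a) (fun a _ => hf1 a)
    have h2 : 0 ≤ ∏ i ∈ Finset.Ioc 0 k, f (i : ℤ) :=
      Finset.prod_nonneg fun i _ => hf0 _
    nlinarith
  -- compare with exponential
  have hexp_bound : ∏ i ∈ Finset.Ioc 0 k, f (i : ℤ)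
      ≤ exp (∑ i ∈ Finset.Ioc 0 k, -(c * g (i : ℤ))) := by
    rw [Real.exp_sum]
    apply Finset.prod_le_prod (fun i _ => hf0 _)
    intro i _
    rw [hfeq]
    have := Real.add_one_le_exp (-(c * g (i : ℤ)))
    linarith
  have hsum_ge : c / 2 * T k ≤ ∑ i ∈ Finset.Ioc 0 k, c * g (i : ℤ) := by
    rw [hTdef, Finset.mul_sum]
    apply Finset.sum_le_sum
    intro i _
    have hnat : ((i : ℤ)).natAbs = i := Int.natAbs_natCast i
    have hmin : min (lam i * (δ / 2)) 1 / 2 ≤ g (i : ℤ) := by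
      have := half_min_le_one_sub_exp (x := lam i * (δ / 2)) (mul_nonneg (hlam i) (by positivity))
      simp only [hgdef, hnat]
      have heq : lam i * δ / 2 = lam i * (δ / 2) := by ring
      rw [heq]
      exact this
    have hmin0 : 0 ≤ min (lam i * (δ / 2)) 1 := le_min (mul_nonneg (hlam i) (by positivity)) zero_le_one
    nlinarith
  have hPsmall : P < ε / 2 := by
    have h1 : ∑ i ∈ Finset.Ioc 0 k, -(c * g (i : ℤ)) ≤ -(c / 2 * T k) := by
      rw [Finset.sum_neg_distrib]
      linarith
    calc P ≤ exp (∑ i ∈ Finset.Ioc 0 k, -(c * g (i : ℤ))) := le_trans hP_le hexp_bound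
      _ ≤ exp (-(c / 2 * T k)) := Real.exp_le_exp.2 h1
      _ < ε / 2 := hKk
  -- conclude
  have hFk := hF δ k
  have hPP : (∏ a ∈ Finset.Icc (-(k : ℤ)) (k : ℤ),
      (1 - exp (-(2*δ)) * (1 - exp (-(lam a.natAbs * δ / 2)))
        * (1 - exp (-(lam b * δ / 2))))) = P := by
    rw [hPdef]
  rw [hFk, hPP]
  have hexpδ1 : exp (-δ) ≤ 1 := by rw [Real.exp_le_one_iff]; linarith
  have hexpδ2 : 1 - δ ≤ exp (-δ) := by
    have := Real.add_one_le_exp (-δ)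
    linarith
  nlinarith
end

section
/- Let (ζ(a,n))_{(a,n)} be independent Bernoulli random variables indexed by pairs (a,n) ∈ ℤ × ℤ≥0 with a + n even, each equal to 1 with probability at least 1 - δ. Consider the event E that there exists an infinite sequence (a_i)_{i≥0} with a_0 = 0, |a_{i+1} - a_i| = 1, and ζ(a_i, i) = 1 for all i ≥ 0. Then P(E) → 1 as δ → 0; in particular there exists δ₀ > 0 such that P(E) > 0 for all δ < δ₀. -/
/-!
In the coordinates `(a, n) = (x - y, x + y)` the sites of the even sublattice are the cells
`(x, y)` of the quadrant, and open oriented paths are open up-right lattice paths.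

If the origin is open but its up-right cluster `R` misses some level `x + y = m`, then `R` is
finite, and walking along its boundary with `R` on the right returns to the start after `L`
steps, each a choice among three turns. The walk returns to its starting corner, so half of its
walls face north or east; these face closed sites outside `R`, each faced at most twice. Thus a
finite cluster exhibits `⌈L/4⌉` closed sites determined by a word in `{0, 1, 2}^L`, and the union
bound gives `P(fail) ≤ δ + ∑ 3^L δ^⌈L/4⌉ = O(δ)`. If instead every level is reached from the
origin, going up whenever the site above still reaches every level, and right otherwise, is an
infinite open path.
-/

open MeasureTheory ProbabilityTheory
open scoped ENNReal

/-- The event that there is an infinite open oriented path from the origin in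
oriented site percolation on the even sublattice of ℤ × ℤ≥0. -/
def OrientedSurvival {Ω : Type*}
    (ζ : {q : ℤ × ℕ // Even (q.1 + (q.2 : ℤ))} → Ω → Bool) : Set Ω :=
  {ω | ∃ a : ℕ → ℤ, a 0 = 0 ∧
    (∀ i : ℕ, |a (i + 1) - a i| = 1) ∧
    ∀ i : ℕ, ∀ h : Even (a i + (i : ℤ)), ζ ⟨(a i, i), h⟩ ω = true}

open Finset

namespace OrientedPercolation

abbrev Cell := ℤ × ℤ

inductive Dir | N | E | S | W
  deriving DecidableEq

instance : Fintype Dir := ⟨{.N, .E, .S, .W}, fun d => by cases d <;> decide⟩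

namespace Dir

def vec : Dir → Cell
  | N => (0, 1) | E => (1, 0) | S => (0, -1) | W => (-1, 0)

def rot : Dir → Dir
  | N => E | E => S | S => W | W => N

def cornerOffset : Dir → Cell
  | N => (0, 1) | E => (1, 1) | S => (1, 0) | W => (0, 0)

@[simp] lemma vec_rot_rot (d : Dir) : d.rot.rot.vec = -d.vec := by cases d <;> decide

lemma two_mul_indicator_eq (d : Dir) :
    2 * (if d = N ∨ d = E then 1 else 0 : ℤ) = 1 + d.rot.vec.1 - d.rot.vec.2 := by
  cases d <;> decide

end Dir

open Dir

/-- `(c, d)` is the side of the unit square `c` facing `d`, traversed clockwise around `c`;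
its `corner` is the vertex where it starts. -/
abbrev Wall := Cell × Dir

def Wall.outer (w : Wall) : Cell := w.1 + w.2.vec

def Wall.corner (w : Wall) : Cell := w.1 + w.2.cornerOffset

/-- The three ways to continue a clockwise boundary walk: turn right around the same cell, go
straight on along the next cell, or turn left onto the diagonal cell. -/
def Wall.move (w : Wall) : Fin 3 → Wall
  | 0 => (w.1, w.2.rot)
  | 1 => (w.1 + w.2.rot.vec, w.2)
  | 2 => (w.1 + w.2.rot.vec + w.2.vec, w.2.rot.rot.rot)

lemma Wall.corner_move (w : Wall) (t : Fin 3) :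
    (w.move t).corner = w.corner + w.2.rot.vec := by
  rcases w with ⟨c, d⟩
  fin_cases t <;> cases d <;> simp [move, corner, cornerOffset, vec, rot, Prod.ext_iff]

def walk (w₀ : Wall) {L : ℕ} (u : Fin L → Fin 3) : ℕ → Wall
  | 0 => w₀
  | k + 1 => if h : k < L then (walk w₀ u k).move (u ⟨k, h⟩) else walk w₀ u k

section Walk

variable {w₀ : Wall} {L : ℕ} {u : Fin L → Fin 3}

lemma walk_succ {k : ℕ} (hk : k < L) :
    walk w₀ u (k + 1) = (walk w₀ u k).move (u ⟨k, hk⟩) :=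
  dif_pos hk

lemma corner_walk {k : ℕ} (hk : k ≤ L) :
    (walk w₀ u k).corner = w₀.corner + ∑ j ∈ range k, (walk w₀ u j).2.rot.vec := by
  induction k with
  | zero => simp [walk]
  | succ k ih =>
    rw [walk_succ hk, Wall.corner_move, ih (by omega), sum_range_succ, add_assoc]

/-- Along a wall facing north or east the corner moves by `(1, 0)` or `(0, -1)`, along any
other wall by `(-1, 0)` or `(0, 1)`; on a closed walk the changes of `x - y` cancel. -/
lemma two_mul_card_filter_of_walk_eq (hL : walk w₀ u L = w₀) :
    2 * #{k ∈ range L | (walk w₀ u k).2 = N ∨ (walk w₀ u k).2 = E} = L := by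
  have hsum : ∑ k ∈ range L, (walk w₀ u k).2.rot.vec = 0 := by
    simpa [hL] using (corner_walk (w₀ := w₀) (u := u) le_rfl).symm
  have hfst : ∑ k ∈ range L, (walk w₀ u k).2.rot.vec.1 = 0 := by
    rw [← Prod.fst_sum, hsum, Prod.fst_zero]
  have hsnd : ∑ k ∈ range L, (walk w₀ u k).2.rot.vec.2 = 0 := by
    rw [← Prod.snd_sum, hsum, Prod.snd_zero]
  zify
  rw [card_filter, Nat.cast_sum, mul_sum]
  push_cast
  simp_rw [two_mul_indicator_eq]
  simp [sum_add_distrib, sum_sub_distrib, hfst, hsnd]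

def exposedSites (w₀ : Wall) {L : ℕ} (u : Fin L → Fin 3) : Finset Cell :=
  {k ∈ range L | (walk w₀ u k).2 = N ∨ (walk w₀ u k).2 = E}.image
    fun k => (walk w₀ u k).outer

lemma card_filter_dir_le_card_exposedSites (hinj : Set.InjOn (walk w₀ u) (Set.Iio L))
    {d : Dir} (hd : d = N ∨ d = E) :
    #{k ∈ range L | (walk w₀ u k).2 = d} ≤ #(exposedSites w₀ u) := by
  refine card_le_card_of_injOn (fun k => (walk w₀ u k).outer) ?_ ?_
  · intro k hk
    simp only [coe_filter, mem_range, Set.mem_ofPred_eq] at hk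
    exact mem_image_of_mem _ (mem_filter.2 ⟨mem_range.2 hk.1, hk.2 ▸ hd⟩)
  · intro k hk l hl hkl
    simp only [coe_filter, mem_range, Set.mem_ofPred_eq] at hk hl
    refine hinj hk.1 hl.1 (Prod.ext ?_ (hk.2.trans hl.2.symm))
    simpa [Wall.outer, hk.2, hl.2] using hkl

lemma le_four_mul_card_exposedSites (hL : walk w₀ u L = w₀)
    (hinj : Set.InjOn (walk w₀ u) (Set.Iio L)) : L ≤ 4 * #(exposedSites w₀ u) := by
  have hN := card_filter_dir_le_card_exposedSites hinj (d := N) (Or.inl rfl)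
  have hE := card_filter_dir_le_card_exposedSites hinj (d := E) (Or.inr rfl)
  have hNE := card_union_le {k ∈ range L | (walk w₀ u k).2 = N}
    {k ∈ range L | (walk w₀ u k).2 = E}
  rw [← filter_or] at hNE
  have := two_mul_card_filter_of_walk_eq hL
  omega

end Walk

section WallFollowing

variable (R : Set Cell)

def IsWall (w : Wall) : Prop := w.1 ∈ R ∧ w.outer ∉ R

open Classical in
noncomputable def turn (w : Wall) : Fin 3 :=
  if w.1 + w.2.rot.vec ∈ R then (if w.1 + w.2.rot.vec + w.2.vec ∈ R then 2 else 1) else 0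

noncomputable def next (w : Wall) : Wall := w.move (turn R w)

open Classical in
noncomputable def prev (w : Wall) : Wall :=
  if w.1 + w.2.rot.rot.rot.vec ∈ R then
    (if w.1 + w.2.vec + w.2.rot.rot.rot.vec ∈ R then
      (w.1 + w.2.vec + w.2.rot.rot.rot.vec, w.2.rot)
     else (w.1 + w.2.rot.rot.rot.vec, w.2))
  else (w.1, w.2.rot.rot.rot)

variable {R}

lemma IsWall.next {w : Wall} (hw : IsWall R w) : IsWall R (next R w) := by
  rcases w with ⟨c, d⟩
  obtain ⟨hc, hcd⟩ := hw
  unfold OrientedPercolation.next turn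
  split_ifs with h₁ h₂
  · refine ⟨h₂, ?_⟩
    simpa [Wall.move, Wall.outer, add_assoc] using hcd
  · exact ⟨h₁, h₂⟩
  · exact ⟨hc, h₁⟩

lemma prev_next {w : Wall} (hw : IsWall R w) : prev R (next R w) = w := by
  rcases w with ⟨c, d⟩
  obtain ⟨hc, hcd⟩ := hw
  unfold OrientedPercolation.next turn
  split_ifs with h₁ h₂ <;> unfold prev <;> split_ifs <;> cases d <;>
    simp_all [Wall.move, Wall.outer, vec, rot, add_assoc, Prod.mk_add_mk, Prod.mk_zero_zero]

lemma next_injOn : Set.InjOn (next R) {w | IsWall R w} := fun x hx y hy h => by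
  rw [← prev_next hx, ← prev_next hy, h]

lemma exists_isPeriodicPt_next (hR : R.Finite) {w₀ : Wall} (hw₀ : IsWall R w₀) :
    ∃ L > 0, Function.IsPeriodicPt (next R) L w₀ ∧
      Set.InjOn (fun k => (next R)^[k] w₀) (Set.Iio L) ∧
      ∀ k, IsWall R ((next R)^[k] w₀) := by
  let f : {w | IsWall R w} → {w | IsWall R w} := fun w => ⟨next R w, w.2.next⟩
  have hfin : Finite {w | IsWall R w} :=
    (hR.prod (Set.finite_univ (α := Dir))).subset (fun w hw => ⟨hw.1, trivial⟩) |>.to_subtype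
  have hf : Function.Injective f := fun x y h =>
    Subtype.ext (next_injOn x.2 y.2 (congrArg Subtype.val h))
  have hval : ∀ k, ((f^[k] ⟨w₀, hw₀⟩ : {w | IsWall R w}) : Wall) = (next R)^[k] w₀ :=
    fun k => (Function.Semiconj.iterate_right (f := Subtype.val) (fun _ => rfl) k).eq _
  refine ⟨Function.minimalPeriod f ⟨w₀, hw₀⟩,
    Function.minimalPeriod_pos_of_mem_periodicPts (hf.mem_periodicPts _), ?_, ?_, ?_⟩
  · rw [Function.IsPeriodicPt, Function.IsFixedPt, ← hval, Function.iterate_minimalPeriod]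
  · intro k hk l hl hkl
    exact Function.iterate_injOn_Iio_minimalPeriod hk hl
      (Subtype.ext (by simpa [hval] using hkl))
  · intro k
    rw [← hval]
    exact Subtype.prop _

lemma exists_contour (hR : R.Finite) {w₀ : Wall} (hw₀ : IsWall R w₀) :
    ∃ L > 0, ∃ u : Fin L → Fin 3,
      (∀ k < L, IsWall R (walk w₀ u k)) ∧ L ≤ 4 * #(exposedSites w₀ u) := by
  obtain ⟨L, hL, hper, hinj, hwalls⟩ := exists_isPeriodicPt_next hR hw₀
  let u : Fin L → Fin 3 := fun k => turn R ((next R)^[k] w₀)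
  have hwalk : ∀ k ≤ L, walk w₀ u k = (next R)^[k] w₀ := by
    intro k hk
    induction k with
    | zero => rfl
    | succ k ih => rw [walk_succ hk, ih (by omega), Function.iterate_succ_apply']; rfl
  refine ⟨L, hL, u, fun k hk => hwalk k hk.le ▸ hwalls k, le_four_mul_card_exposedSites ?_ ?_⟩
  · rw [hwalk L le_rfl]
    exact hper
  · intro k hk l hl hkl
    rw [hwalk k (le_of_lt hk), hwalk l (le_of_lt hl)] at hkl
    exact hinj hk hl hkl

end WallFollowing

def level (c : Cell) : ℤ := c.1 + c.2

def OpenStep (η : Cell → Bool) (c d : Cell) : Prop :=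
  (d = c + (1, 0) ∨ d = c + (0, 1)) ∧ η d = true

def Reach (η : Cell → Bool) (c d : Cell) : Prop :=
  η c = true ∧ Relation.ReflTransGen (OpenStep η) c d

variable {η : Cell → Bool} {c d : Cell}

lemma Reach.refl (h : η c = true) : Reach η c c := ⟨h, .refl⟩

lemma Reach.tail (h : Reach η c d) {e : Cell} (he : OpenStep η d e) : Reach η c e :=
  ⟨h.1, h.2.tail he⟩

lemma Reach.le (h : Reach η c d) : c ≤ d := by
  obtain ⟨-, h⟩ := h
  induction h with
  | refl => exact le_rfl
  | tail _ hs ih =>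
    obtain ⟨rfl | rfl, -⟩ := hs <;> exact ih.trans (by simp [Prod.le_def])

lemma Reach.exists_level (h : Reach η c d) {m : ℤ} (hcm : level c ≤ m) (hmd : m ≤ level d) :
    ∃ e, Reach η c e ∧ level e = m := by
  obtain ⟨hc, h⟩ := h
  induction h with
  | refl => exact ⟨c, .refl hc, le_antisymm hcm hmd⟩
  | @tail d e hd hs ih =>
    have hlevel : level e = level d + 1 := by
      obtain ⟨rfl | rfl, -⟩ := hs <;> simp [level] <;> ring
    rcases eq_or_lt_of_le hmd with rfl | hlt
    · exact ⟨e, ⟨hc, hd.tail hs⟩, rfl⟩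
    · exact ih (by omega)

lemma Reach.eq_or_reach_succ (h : Reach η c d) :
    d = c ∨ Reach η (c + (1, 0)) d ∨ Reach η (c + (0, 1)) d := by
  rcases Relation.ReflTransGen.cases_head h.2 with rfl | ⟨e, ⟨rfl | rfl, he⟩, hed⟩
  · exact .inl rfl
  · exact .inr (.inl ⟨he, hed⟩)
  · exact .inr (.inr ⟨he, hed⟩)

def Percolates (η : Cell → Bool) (c : Cell) : Prop :=
  ∀ m, level c ≤ m → ∃ d, Reach η c d ∧ level d = m

lemma Percolates.isOpen (h : Percolates η c) : η c = true := by
  obtain ⟨d, hd, -⟩ := h (level c) le_rfl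
  exact hd.1

lemma Percolates.right_of_not_up (hc : Percolates η c) (hup : ¬ Percolates η (c + (0, 1))) :
    Percolates η (c + (1, 0)) := by
  simp only [Percolates, not_forall, not_exists, not_and] at hup
  obtain ⟨m₀, hm₀, hblocked⟩ := hup
  intro m hm
  simp only [level, Prod.fst_add, Prod.snd_add] at hm hm₀
  obtain ⟨d, hd, hdm⟩ := hc (max m m₀) (by simp [level]; omega)
  rcases hd.eq_or_reach_succ with rfl | hright | hup
  · simp [level] at hdm; omega
  · exact hright.exists_level (by simp [level]; omega) (by omega)
  · obtain ⟨e, he, hem⟩ := hup.exists_level (m := m₀) (by simp [level]; omega) (by omega)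
    exact absurd hem (hblocked e he)

open Classical in
noncomputable def greedyPath (η : Cell → Bool) : ℕ → Cell
  | 0 => 0
  | i + 1 =>
    if Percolates η (greedyPath η i + (0, 1)) then greedyPath η i + (0, 1)
    else greedyPath η i + (1, 0)

lemma greedyPath_succ (η : Cell → Bool) (i : ℕ) :
    greedyPath η (i + 1) = greedyPath η i + (0, 1) ∨
      greedyPath η (i + 1) = greedyPath η i + (1, 0) := by
  rw [greedyPath]
  split_ifs
  exacts [.inl rfl, .inr rfl]

lemma percolates_greedyPath (h : Percolates η 0) (i : ℕ) : Percolates η (greedyPath η i) := by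
  induction i with
  | zero => exact h
  | succ i ih =>
    rw [greedyPath]
    split_ifs with hup
    exacts [hup, ih.right_of_not_up hup]

lemma level_greedyPath (η : Cell → Bool) (i : ℕ) : level (greedyPath η i) = i := by
  induction i with
  | zero => rfl
  | succ i ih =>
    rcases greedyPath_succ η i with h | h <;> simp [h, level] at ih ⊢ <;> omega

lemma nonneg_greedyPath (η : Cell → Bool) (i : ℕ) : 0 ≤ greedyPath η i := by
  induction i with
  | zero => exact le_rfl
  | succ i ih =>
    rcases greedyPath_succ η i with h | h <;> rw [h] <;> exact ih.trans (by simp [Prod.le_def])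

lemma finite_setOf_reach_of_not_percolates (h : ¬ Percolates η 0) : {d | Reach η 0 d}.Finite := by
  simp only [Percolates, not_forall, not_exists, not_and] at h
  obtain ⟨m, hm, hblocked⟩ := h
  refine (Set.finite_Icc (0 : Cell) (m, m)).subset fun d hd => ?_
  have hlevel : level d < m := by
    by_contra! h
    obtain ⟨e, he, hem⟩ := Reach.exists_level hd hm h
    exact hblocked e he hem
  have := Reach.le hd
  simp only [level, Prod.le_def, Set.mem_Icc, Prod.fst_zero, Prod.snd_zero] at this hlevel hm ⊢
  omega

def startWall : Wall := (0, W)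

lemma exists_contour_of_not_percolates (h0 : η 0 = true) (hperc : ¬ Percolates η 0) :
    ∃ L > 0, ∃ u : Fin L → Fin 3, L ≤ 4 * #(exposedSites startWall u) ∧
      ∀ s ∈ exposedSites startWall u, 0 ≤ s ∧ η s = false := by
  have hstart : IsWall {d | Reach η 0 d} startWall :=
    ⟨.refl h0, fun h => by simpa [startWall, Wall.outer, vec, Prod.le_def] using Reach.le h⟩
  obtain ⟨L, hL, u, hwalls, hcard⟩ :=
    exists_contour (finite_setOf_reach_of_not_percolates hperc) hstart
  refine ⟨L, hL, u, hcard, ?_⟩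
  simp only [exposedSites, mem_image, mem_filter, mem_range]
  rintro _ ⟨k, ⟨hk, hdir⟩, rfl⟩
  obtain ⟨hin, hout⟩ := hwalls k hk
  have hstep : (walk startWall u k).outer = (walk startWall u k).1 + (1, 0) ∨
      (walk startWall u k).outer = (walk startWall u k).1 + (0, 1) := by
    rcases hdir with h | h <;> simp [Wall.outer, h, vec]
  refine ⟨(Reach.le hin).trans ?_, ?_⟩
  · rcases hstep with h | h <;> rw [h] <;> simp [Prod.le_def]
  · by_contra hopen
    exact hout (hin.tail ⟨hstep, by simpa using hopen⟩)

lemma three_pow_mul_pow_le {δ : ℝ≥0∞} (hδ : 1296 * δ ≤ 1) {L : ℕ} (hL : 0 < L) :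
    3 ^ L * δ ^ ((L + 3) / 4) ≤ 2⁻¹ ^ L * (1296 * δ) := by
  set m := (L + 3) / 4
  have hm : m = m - 1 + 1 := by omega
  have hsix : 6 ^ L * δ ^ m ≤ 1296 * δ :=
    calc 6 ^ L * δ ^ m ≤ 6 ^ (4 * m) * δ ^ m := by gcongr <;> [norm_num; omega]
      _ = (1296 * δ) ^ (m - 1) * (1296 * δ) := by
        rw [pow_mul, ← mul_pow, ← pow_succ, ← hm]; norm_num
      _ ≤ 1296 * δ := mul_le_of_le_one_left' (pow_le_one₀ zero_le hδ)
  calc 3 ^ L * δ ^ m = 2⁻¹ ^ L * (6 ^ L * δ ^ m) := by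
        rw [← mul_assoc, ← mul_pow, show (2⁻¹ * 6 : ℝ≥0∞) = 3 by
          rw [show (6 : ℝ≥0∞) = 2 * 3 by norm_num, ← mul_assoc,
            ENNReal.inv_mul_cancel (by norm_num) (by norm_num), one_mul]]
    _ ≤ 2⁻¹ ^ L * (1296 * δ) := by gcongr

lemma tsum_three_pow_mul_pow_le {δ : ℝ≥0∞} (hδ : 1296 * δ ≤ 1) :
    ∑' L : ℕ, 3 ^ L * (if 0 < L then δ ^ ((L + 3) / 4) else 0) ≤ 2592 * δ :=
  calc ∑' L : ℕ, 3 ^ L * (if 0 < L then δ ^ ((L + 3) / 4) else 0)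
      ≤ ∑' L : ℕ, 2⁻¹ ^ L * (1296 * δ) := by
        refine ENNReal.tsum_le_tsum fun L => ?_
        split_ifs with hL
        · exact three_pow_mul_pow_le hδ hL
        · simp
    _ = 2592 * δ := by
        rw [ENNReal.tsum_mul_right, ENNReal.tsum_geometric, ENNReal.one_sub_inv_two, inv_inv,
          ← mul_assoc]
        norm_num

abbrev Site := {q : ℤ × ℕ // Even (q.1 + (q.2 : ℤ))}

/-- The cell `(x, y)` of the quadrant is the site `(x - y, x + y)`; outside the quadrant the
coordinates are truncated at `0` only to make the map total. -/
def toSite (c : Cell) : Site :=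
  ⟨(c.1.toNat - c.2.toNat, c.1.toNat + c.2.toNat), c.1.toNat, by push_cast; ring⟩

lemma toSite_of_nonneg {c : Cell} (hc : 0 ≤ c) : (toSite c).1 = (c.1 - c.2, (level c).toNat) := by
  simp only [Prod.le_def, Prod.fst_zero, Prod.snd_zero] at hc
  simp only [toSite, level, Prod.mk.injEq]
  omega

lemma toSite_injOn : Set.InjOn toSite {c | 0 ≤ c} := fun c hc d hd h => by
  have h' := congrArg Subtype.val h
  rw [toSite_of_nonneg hc, toSite_of_nonneg hd] at h'
  simp only [Set.mem_ofPred_eq, Prod.le_def, Prod.fst_zero, Prod.snd_zero] at hc hd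
  simp only [level, Prod.mk.injEq] at h'
  ext <;> omega

variable {Ω : Type*}

def cellState (ζ : Site → Ω → Bool) (ω : Ω) (c : Cell) : Bool :=
  if 0 ≤ c then ζ (toSite c) ω else false

def closedOn (ζ : Site → Ω → Bool) (S : Finset Cell) : Set Ω :=
  {ω | ∀ s ∈ S, cellState ζ ω s = false}

lemma mem_orientedSurvival_of_percolates {ζ : Site → Ω → Bool} {ω : Ω}
    (h : Percolates (cellState ζ ω) 0) : ω ∈ OrientedSurvival ζ := by
  let p := greedyPath (cellState ζ ω)
  refine ⟨fun i => (p i).1 - (p i).2, rfl, fun i => ?_, fun i hi => ?_⟩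
  · rcases greedyPath_succ (cellState ζ ω) i with h | h <;> simp [p, h]
  · have hopen : cellState ζ ω (p i) = true := (percolates_greedyPath h i).isOpen
    have hsite : toSite (p i) = ⟨((p i).1 - (p i).2, i), hi⟩ :=
      Subtype.ext (by rw [toSite_of_nonneg (nonneg_greedyPath _ i), level_greedyPath]; simp [p])
    rwa [cellState, if_pos (nonneg_greedyPath _ i), hsite] at hopen

abbrev Word := Σ L : ℕ, (Fin L → Fin 3)

def Word.sites (u : Word) : Finset Cell := exposedSites startWall u.2

def Word.IsContour (u : Word) : Prop :=
  0 < u.1 ∧ u.1 ≤ 4 * #u.sites ∧ ∀ s ∈ u.sites, 0 ≤ s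

lemma compl_orientedSurvival_subset (ζ : Site → Ω → Bool) :
    (OrientedSurvival ζ)ᶜ ⊆
      closedOn ζ {0} ∪ ⋃ (u : Word) (_ : u.IsContour), closedOn ζ u.sites := by
  intro ω hω
  by_contra hcov
  simp only [Set.mem_union, Set.mem_iUnion, not_or, not_exists] at hcov
  obtain ⟨horigin, hcontour⟩ := hcov
  have h0 : cellState ζ ω 0 = true := by simpa [closedOn] using horigin
  refine hω (mem_orientedSurvival_of_percolates (by_contra fun hperc => ?_))
  obtain ⟨L, hL, u, hcard, hsites⟩ := exists_contour_of_not_percolates h0 hperc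
  exact hcontour ⟨L, u⟩ ⟨hL, hcard, fun s hs => (hsites s hs).1⟩ fun s hs => (hsites s hs).2

variable [MeasurableSpace Ω] {P : Measure Ω} {ζ : Site → Ω → Bool} {δ : ℝ≥0∞}

lemma measure_closed_le [IsProbabilityMeasure P] {q : Site} (hmeas : Measurable (ζ q))
    (hq : 1 - δ ≤ P {ω | ζ q ω = true}) : P {ω | ζ q ω = false} ≤ δ := by
  have hcompl : {ω | ζ q ω = false} = (ζ q ⁻¹' {true})ᶜ := by ext; simp
  rw [hcompl, prob_compl_eq_one_sub (hmeas (measurableSet_singleton true))]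
  exact tsub_le_iff_tsub_le.1 hq

lemma measure_closedOn_le (hind : iIndepFun (m := fun _ => ⊤) ζ P)
    (hclosed : ∀ q, P {ω | ζ q ω = false} ≤ δ) {S : Finset Cell} (hS : ∀ s ∈ S, 0 ≤ s) :
    P (closedOn ζ S) ≤ δ ^ #S := by
  have hevent : closedOn ζ S = ⋂ q ∈ S.image toSite, ζ q ⁻¹' {false} := by
    ext ω
    simp only [closedOn, Set.mem_ofPred_eq, Set.mem_iInter, Set.mem_preimage,
      Set.mem_singleton_iff, forall_mem_image]
    exact forall₂_congr fun s hs => by rw [cellState, if_pos (hS s hs)]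
  rw [hevent, hind.meas_biInter fun q _ => ⟨{false}, trivial, rfl⟩,
    ← card_image_of_injOn fun c hc d hd => toSite_injOn (hS c hc) (hS d hd)]
  exact prod_le_pow_card _ _ _ fun q _ => hclosed q

lemma measure_contour_le (hind : iIndepFun (m := fun _ => ⊤) ζ P)
    (hclosed : ∀ q, P {ω | ζ q ω = false} ≤ δ) (hδ : δ ≤ 1) (u : Word) :
    P (⋃ (_ : u.IsContour), closedOn ζ u.sites) ≤
      if 0 < u.1 then δ ^ ((u.1 + 3) / 4) else 0 := by
  classical
  rw [Set.iUnion_eq_if]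
  split_ifs with hu hL
  · exact (measure_closedOn_le hind hclosed hu.2.2).trans
      (pow_le_pow_of_le_one zero_le hδ (by have := hu.2.1; omega))
  · exact absurd hu.1 hL
  all_goals simp

lemma tsum_word_eq (g : ℕ → ℝ≥0∞) : ∑' u : Word, g u.1 = ∑' L : ℕ, 3 ^ L * g L := by
  rw [ENNReal.tsum_sigma']
  congr! with L
  simp [tsum_fintype]

lemma measure_compl_orientedSurvival_le (hind : iIndepFun (m := fun _ => ⊤) ζ P)
    (hclosed : ∀ q, P {ω | ζ q ω = false} ≤ δ) (hδ : 1296 * δ ≤ 1) :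
    P (OrientedSurvival ζ)ᶜ ≤ 2593 * δ := by
  have hδ₁ : δ ≤ 1 := le_trans (le_mul_of_one_le_left zero_le (by norm_num)) hδ
  calc P (OrientedSurvival ζ)ᶜ
      ≤ P (closedOn ζ {0}) + P (⋃ (u : Word) (_ : u.IsContour), closedOn ζ u.sites) :=
        (measure_mono (compl_orientedSurvival_subset ζ)).trans (measure_union_le _ _)
    _ ≤ δ ^ 1 + ∑' u : Word, if 0 < u.1 then δ ^ ((u.1 + 3) / 4) else 0 := by
        gcongr
        · exact measure_closedOn_le hind hclosed (by simp)
        · exact (measure_iUnion_le _).trans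
            (ENNReal.tsum_le_tsum (measure_contour_le hind hclosed hδ₁))
    _ ≤ δ + 2592 * δ := by
        rw [pow_one, tsum_word_eq (fun L => if 0 < L then δ ^ ((L + 3) / 4) else 0)]
        gcongr
        exact tsum_three_pow_mul_pow_le hδ
    _ = 2593 * δ := by ring

end OrientedPercolation

open OrientedPercolation

/-- for supercritical oriented site percolation with site density
at least `1 - δ`, the survival probability tends to `1` as `δ → 0`; in
particular it is positive for small `δ`. -/
theorem truncation_stmt11 :
    ∀ ε > (0 : ℝ≥0∞), ∃ δ₀ > (0 : ℝ≥0∞), ∀ (δ : ℝ≥0∞), δ < δ₀ →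
      ∀ (Ω : Type) (mΩ : MeasurableSpace Ω) (P : Measure Ω),
        IsProbabilityMeasure P →
        ∀ (ζ : {q : ℤ × ℕ // Even (q.1 + (q.2 : ℤ))} → Ω → Bool),
          (∀ q, Measurable (ζ q)) →
          iIndepFun (m := fun _ => ⊤) ζ P →
          (∀ q, 1 - δ ≤ P {ω | ζ q ω = true}) →
          1 - ε < P (OrientedSurvival ζ) := by
  intro ε hε
  refine ⟨min ε 1 / 2593, ENNReal.div_pos (lt_min hε one_pos).ne' (by norm_num), ?_⟩
  intro δ hδ Ω _ P _ ζ hmeas hind hopen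
  have hδε : 2593 * δ < min ε 1 := by
    rwa [ENNReal.lt_div_iff_mul_lt (by norm_num) (by norm_num), mul_comm] at hδ
  have hδ₁ : 1296 * δ ≤ 1 :=
    calc 1296 * δ ≤ 2593 * δ := by gcongr; norm_num
      _ ≤ 1 := hδε.le.trans (min_le_right _ _)
  have hfail := measure_compl_orientedSurvival_le hind
    (fun q => measure_closed_le (hmeas q) (hopen q)) hδ₁
  have hlt : 1 < min ε 1 + P (OrientedSurvival ζ) :=
    calc 1 = P Set.univ := measure_univ.symm
      _ ≤ P (OrientedSurvival ζ)ᶜ + P (OrientedSurvival ζ) := by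
        simpa using measure_univ_le_add_compl (μ := P) (OrientedSurvival ζ)ᶜ
      _ < min ε 1 + P (OrientedSurvival ζ) :=
        ENNReal.add_lt_add_right (measure_ne_top _ _) (hfail.trans_lt hδε)
  calc 1 - ε ≤ 1 - min ε 1 := tsub_le_tsub_left (min_le_left _ _) _
    _ < P (OrientedSurvival ζ) := ENNReal.sub_lt_of_lt_add (min_le_right _ _) (by rwa [add_comm])
end
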